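/- For every word w over the alphabet {1_1, ..., 1_k, 2}, the standard k-ribbon Fibonacci tableaux of shape w with entries 1, ..., n are in bijection with the maximal chains from the empty word ∅ to w in the poset S(k) (such chains necessarily have length n equal to the rank of w), where the tableau corresponding to a chain has j's placed in the k-ribbon created at the (n−j+1)-st step of the chain. -/

import Mathlib

namespace KRF

/-- A letter of the alphabet `{1_1, …, 1_k, 2}`:  `one j` stands for the letter `1_j`
(with `1 ≤ j ≤ k` for genuine letters), and `two` stands for the letter `2`. -/
inductive Letter (k : ℕ) : Type where
  | one : ℕ → Letter k
  | two : Letter k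
deriving DecidableEq

/-- A word over the alphabet `{1_1, …, 1_k, 2}`, listed from the leftmost letter to the
rightmost letter. -/
abbrev Word (k : ℕ) := List (Letter k)

/-- The contribution of a letter to the rank: each `1_j` counts `1` and each `2` counts `2`. -/
def Letter.rank {k : ℕ} : Letter k → ℕ
  | .one _ => 1
  | .two => 2

/-- The rank of a word: the sum of its letters. -/
def Word.rank {k : ℕ} (w : Word k) : ℕ := (w.map Letter.rank).sum

/-- The letter `1_j` is valid when `1 ≤ j ≤ k`. -/
def Letter.Valid (k : ℕ) : Letter k → Prop
  | .one j => 1 ≤ j ∧ j ≤ k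
  | .two => True

/-- A genuine word of the Fibonacci poset `Z(k)`: all of its letters are valid. -/
def Word.Valid (k : ℕ) (w : Word k) : Prop := ∀ l ∈ w, l.Valid k

/-- The cover relation of the Fibonacci poset `Z(k)`:  `z` is covered by `w` iff `z` is
obtained from `w` either by changing a `2` into some `1_j` when all letters to the left of
that `2` are `2`'s, or by deleting the leftmost letter of the form `1_j`. -/
def ZCovers (k : ℕ) (z w : Word k) : Prop :=
  (∃ (p s : Word k) (j : ℕ), (∀ l ∈ p, l = Letter.two) ∧ 1 ≤ j ∧ j ≤ k ∧
      w = p ++ Letter.two :: s ∧ z = p ++ Letter.one j :: s) ∨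
  (∃ (p s : Word k) (j : ℕ), (∀ l ∈ p, l = Letter.two) ∧ 1 ≤ j ∧ j ≤ k ∧
      w = p ++ Letter.one j :: s ∧ z = p ++ s)

/-- `c 0 ⋖ c 1 ⋖ ⋯ ⋖ c n` is a saturated chain in `Z(k)` starting at the empty word. -/
def IsZChain (k n : ℕ) (c : ℕ → Word k) : Prop :=
  c 0 = [] ∧ ∀ i, i < n → ZCovers k (c i) (c (i + 1))

end KRF
namespace KRF

/-- A column of a (tiled and filled) `k`-ribbon Fibonacci tableau.
`single h v` is a column of height 1 (shape letter `1_h`) tiled by one `k`-ribbon of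
height `h` filled with the value `v`.
`double ht hb vt vb` is a column of height 2 (shape letter `2`) tiled by a `k`-ribbon of
height `ht` filled with `vt` stacked on top of a `k`-ribbon of height `hb` (always
`hb = k + 1 - ht` for genuine tableaux) filled with `vb`. -/
inductive Col (k : ℕ) : Type where
  | single : ℕ → ℕ → Col k
  | double : ℕ → ℕ → ℕ → ℕ → Col k
deriving DecidableEq

/-- A (tiled, filled) `k`-ribbon Fibonacci tableau: its list of columns, from the leftmost
column to the rightmost one. -/
abbrev Tab (k : ℕ) := List (Col k)

/-- The shape letter of a column. -/
def Col.shape {k : ℕ} : Col k → Letter k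
  | .single h _ => Letter.one h
  | .double _ _ _ _ => Letter.two

/-- The `k`-ribbon Fibonacci shape (a word) underlying a tableau. -/
def Tab.shape {k : ℕ} (T : Tab k) : Word k := T.map Col.shape

/-- The value in the bottom `k`-ribbon of a column. -/
def Col.bottomVal {k : ℕ} : Col k → ℕ
  | .single _ v => v
  | .double _ _ _ vb => vb

/-- The heights occurring in a column are genuine ribbon heights: between `1` and `k`,
and in a column of height 2 the two heights sum to `k + 1`. -/
def Col.HeightsValid (k : ℕ) : Col k → Prop
  | .single h _ => 1 ≤ h ∧ h ≤ k
  | .double ht hb _ _ => 1 ≤ ht ∧ ht ≤ k ∧ hb = k + 1 - ht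

/-- The list of all entries of a tableau (one for each `k`-ribbon). -/
def Tab.entries {k : ℕ} (T : Tab k) : List ℕ :=
  (T.map fun c => match c with
    | Col.single _ v => [v]
    | Col.double _ _ vt vb => [vt, vb]).flatten

/-- The list of the bottom-ribbon values of the columns of a tableau. -/
def Tab.bottoms {k : ℕ} (T : Tab k) : List ℕ := T.map Col.bottomVal

/-- `T` is a standard `k`-ribbon Fibonacci tableau with entries `1, …, n`:
heights are valid, the entries are exactly `1, …, n`,  and the tableau can be built by
placing `n, n-1, …, 1` in order, each new `k`-ribbon being either appended (as a new
rightmost height-1 column) to the shape formed by the `k`-ribbons containing larger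
entries, or stacked on top of a single such `k`-ribbon.  Equivalently (and this is how we
formalize it): the bottom entries strictly decrease from left to right (in particular the
`k`-ribbon containing the leftmost square of the bottom row contains `n`), and in each
column of height 2 the top entry is smaller than the bottom entry. -/
def IsStandardTab (k n : ℕ) (T : Tab k) : Prop :=
  (∀ c ∈ T, Col.HeightsValid k c) ∧
  (Tab.entries T).Perm (List.range' 1 n) ∧
  List.Chain' (fun a b => b < a) (Tab.bottoms T) ∧
  (∀ c ∈ T, ∀ ht hb vt vb, c = Col.double ht hb vt vb → vt < vb)

/-- Updating a (partial) path tableau along one cover step `z ⋖ w` of `Z(k)`, placing the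
value `i` in the `k` new squares of `w` relative to `z`:  if `w` is obtained from `z` by
inserting a letter `1_j` after the prefix of `2`'s, a new height-1 column with a single
ribbon of height `j` filled with `i` is created there; if `w` is obtained from `z` by
changing the letter `1_h` just after the prefix of `2`'s into a `2`, the `k` new squares
of that column form a `k`-ribbon of height `k + 1 - h` filled with `i`, stacked on top of
the already present `k`-ribbon of height `h`. -/
def updateTab (k : ℕ) (i : ℕ) : Word k → Word k → Tab k → Tab k
  | Letter.two :: z', Letter.two :: w', c :: T => c :: updateTab k i z' w' T
  | Letter.one h :: _, Letter.two :: _, Col.single _ v :: T =>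
      Col.double (k + 1 - h) h i v :: T
  | z, Letter.one j :: w', T => if z = w' then Col.single j i :: T else T
  | _, _, T => T

/-- The `k`-ribbon Fibonacci path tableau determined by a saturated chain in `Z(k)`:
for each `i = 1, …, n` the value `i` is placed in the `k` new squares of `c i` relative
to `c (i-1)`. -/
def chainTab (k : ℕ) (c : ℕ → Word k) : ℕ → Tab k
  | 0 => []
  | m + 1 => updateTab k (m + 1) (c m) (c (m + 1)) (chainTab k c m)

/-- `T` is a `k`-ribbon Fibonacci path tableau with entries `1, …, n`: it is obtained
from some saturated chain `∅ = c 0 ⋖ c 1 ⋖ ⋯ ⋖ c n` in `Z(k)` by placing `i`'s in the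
`k` new squares created at the `i`-th step. -/
def IsPathTab (k n : ℕ) (T : Tab k) : Prop :=
  ∃ c : ℕ → Word k, IsZChain k n c ∧ T = chainTab k c n

end KRF
namespace KRF

/-- The cover relation of the poset `S(k)`: `z` is covered by `w` iff `w` is obtained from
`z` either by appending a letter `1_j` (at the right end), or by replacing one letter
`1_j` of `z` by a `2`. -/
def SCovers (k : ℕ) (z w : Word k) : Prop :=
  (∃ j : ℕ, 1 ≤ j ∧ j ≤ k ∧ w = z ++ [Letter.one j]) ∨
  (∃ (p s : Word k) (j : ℕ), 1 ≤ j ∧ j ≤ k ∧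
      z = p ++ Letter.one j :: s ∧ w = p ++ Letter.two :: s)

/-- Updating a (partial) standard tableau along one cover step `z ⋖ w` of `S(k)`, placing
the value `v` in the newly created `k`-ribbon: if `w = z ++ [1_j]`, a new rightmost
height-1 column with a single `k`-ribbon of height `j` filled with `v` is appended; if `w`
is obtained from `z` by replacing a letter `1_j` by a `2`, a `k`-ribbon of height
`k + 1 − j` filled with `v` is stacked on top of the single `k`-ribbon (of height `j`) of
that column. -/
def updateTabS (k : ℕ) (v : ℕ) : Word k → Word k → Tab k → Tab k
  | [], Letter.one j :: _, T => T ++ [Col.single j v]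
  | a :: z', b :: w', c :: T =>
      if a = b then c :: updateTabS k v z' w' T
      else
        match a, b, c with
        | Letter.one j, Letter.two, Col.single _ vb => Col.double (k + 1 - j) j v vb :: T
        | _, _, c => c :: T
  | _, _, T => T

/-- The standard `k`-ribbon Fibonacci tableau associated with a maximal chain
`∅ = c 0 ⋖ c 1 ⋖ ⋯ ⋖ c n` in `S(k)`: the value `j` is placed in the `k`-ribbon created at
the `(n − j + 1)`-st step of the chain. -/
def sChainTab (k n : ℕ) (c : ℕ → Word k) : ℕ → Tab k
  | 0 => []
  | m + 1 => updateTabS k (n - m) (c m) (c (m + 1)) (sChainTab k n c m)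

/-- `c` is a maximal (saturated) chain from the empty word to `w` in `S(k)`. -/
def IsSChainTo (k n : ℕ) (w : Word k) (c : Fin (n + 1) → Word k) : Prop :=
  c 0 = [] ∧ (∀ i : Fin n, SCovers k (c i.castSucc) (c i.succ)) ∧ c (Fin.last n) = w

/-- The standard tableau associated with a `Fin`-indexed maximal chain in `S(k)`. -/
def sChainTabFin (k n : ℕ) (c : Fin (n + 1) → Word k) : Tab k :=
  sChainTab k n (fun i => c ⟨min i n, Nat.lt_succ_of_le (Nat.min_le_right i n)⟩) n

/-!
Placing `n - m` in the ribbon created at step `m + 1` of a chain in `S(k)` adds a ribbon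
smaller than all earlier ones, either as a new rightmost column of height 1 or on top of a
column of height 1, so every partial tableau is standard. Conversely, in a standard tableau `T`
the ribbons with entries greater than `t` form a tableau `T.trunc t`, and `T.trunc t` arises
from `T.trunc (t + 1)` by one such step: if `t + 1` lies in a bottom ribbon, the columns to its
right have smaller bottom entries and so disappear in `T.trunc t`. Hence
`m ↦ (T.trunc (n - m)).shape` is a chain whose tableau is `T`, and every chain is recovered from
its tableau in this way.
-/

variable {k : ℕ}

lemma SCovers.rank_eq {z w : Word k} (h : SCovers k z w) : w.rank = z.rank + 1 := by
  rcases h with ⟨j, -, -, rfl⟩ | ⟨p, s, j, -, -, rfl, rfl⟩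
  · simp [Word.rank, Letter.rank]
  · simp [Word.rank, Letter.rank]
    omega

def Col.entries : Col k → List ℕ
  | .single _ v => [v]
  | .double _ _ vt vb => [vt, vb]

lemma Tab.entries_cons (c : Col k) (T : Tab k) :
    Tab.entries (c :: T) = c.entries ++ T.entries := by
  cases c <;> rfl

lemma Tab.entries_append (A B : Tab k) : (A ++ B).entries = A.entries ++ B.entries := by
  simp [Tab.entries]

lemma Tab.mem_entries {v : ℕ} {T : Tab k} : v ∈ T.entries ↔ ∃ c ∈ T, v ∈ c.entries := by
  induction T with
  | nil => simp [Tab.entries]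
  | cons d T ih => simp [Tab.entries_cons, ih]

lemma Tab.bottoms_append (A B : Tab k) : (A ++ B).bottoms = A.bottoms ++ B.bottoms := by
  simp [Tab.bottoms]

lemma Tab.shape_append (A B : Tab k) : (A ++ B).shape = A.shape ++ B.shape := by
  simp [Tab.shape]

lemma Col.bottomVal_mem_entries (c : Col k) : c.bottomVal ∈ c.entries := by
  cases c <;> simp [Col.bottomVal, Col.entries]

lemma Tab.mem_entries_of_mem_bottoms {b : ℕ} {T : Tab k} (h : b ∈ T.bottoms) :
    b ∈ T.entries :=
  let ⟨c, hc, hb⟩ := List.mem_map.mp h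
  Tab.mem_entries.mpr ⟨c, hc, hb ▸ c.bottomVal_mem_entries⟩

def IsStandardTabFrom (k a m : ℕ) (T : Tab k) : Prop :=
  (∀ c ∈ T, Col.HeightsValid k c) ∧
  T.entries.Perm (List.range' a m) ∧
  T.bottoms.IsChain (fun a b => b < a) ∧
  (∀ c ∈ T, ∀ ht hb vt vb, c = Col.double ht hb vt vb → vt < vb)

lemma isStandardTab_iff {n : ℕ} {T : Tab k} :
    IsStandardTab k n T ↔ IsStandardTabFrom k 1 n T := Iff.rfl

lemma IsStandardTabFrom.lt_of_mem {a m v : ℕ} {T : Tab k} (hT : IsStandardTabFrom k a m T)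
    (hv : v ∈ T.entries) : a ≤ v ∧ v < a + m :=
  List.mem_range'_1.mp (hT.2.1.subset hv)

lemma IsStandardTabFrom.append_single {v m j : ℕ} {T : Tab k}
    (hT : IsStandardTabFrom k (v + 1) m T) (hj1 : 1 ≤ j) (hj2 : j ≤ k) :
    IsStandardTabFrom k v (m + 1) (T ++ [Col.single j v]) := by
  obtain ⟨hH, hperm, hchain, htop⟩ := hT
  refine ⟨?_, ?_, ?_, ?_⟩
  · simp only [List.mem_append, List.mem_singleton]
    rintro c (hc | rfl)
    exacts [hH c hc, ⟨hj1, hj2⟩]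
  · rw [Tab.entries_append, List.range'_succ]
    exact List.perm_append_singleton _ _ |>.trans (hperm.cons v)
  · rw [Tab.bottoms_append]
    refine hchain.append (List.isChain_singleton _) fun b hb b' hb' => ?_
    obtain rfl : v = b' := by simpa [Tab.bottoms, Col.bottomVal] using hb'
    have := List.mem_range'_1.mp
      (hperm.subset (Tab.mem_entries_of_mem_bottoms (List.mem_of_mem_getLast? hb)))
    omega
  · simp only [List.mem_append, List.mem_singleton]
    rintro c (hc | rfl) ht hb vt vb hcd
    exacts [htop c hc ht hb vt vb hcd, nomatch hcd]

lemma IsStandardTabFrom.stack {v m j vb : ℕ} {Tp Ts : Tab k}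
    (hT : IsStandardTabFrom k (v + 1) m (Tp ++ Col.single j vb :: Ts)) (hj1 : 1 ≤ j)
    (hj2 : j ≤ k) :
    IsStandardTabFrom k v (m + 1) (Tp ++ Col.double (k + 1 - j) j v vb :: Ts) := by
  have hvb : v + 1 ≤ vb := (hT.lt_of_mem (by simp [Tab.entries_append, Tab.entries_cons,
    Col.entries])).1
  obtain ⟨hH, hperm, hchain, htop⟩ := hT
  simp only [List.mem_append, List.mem_cons] at hH htop
  refine ⟨?_, ?_, ?_, ?_⟩
  · simp only [List.mem_append, List.mem_cons]
    rintro c (hc | rfl | hc)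
    · exact hH c (.inl hc)
    · exact ⟨by omega, by omega, by omega⟩
    · exact hH c (.inr (.inr hc))
  · rw [List.range'_succ]
    simp only [Tab.entries_append, Tab.entries_cons, Col.entries] at hperm ⊢
    exact List.perm_middle.trans (hperm.cons v)
  · simpa [Tab.bottoms, Col.bottomVal] using hchain
  · simp only [List.mem_append, List.mem_cons]
    rintro c (hc | rfl | hc) ht hb vt vb' hcd
    · exact htop c (.inl hc) ht hb vt vb' hcd
    · cases hcd
      omega
    · exact htop c (.inr (.inr hc)) ht hb vt vb' hcd

/-- Keeps the ribbons with entries greater than `t`, assuming the top entry of a column of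
height 2 is smaller than its bottom entry. -/
def Col.trunc (t : ℕ) : Col k → Option (Col k)
  | .single h v => if t < v then some (.single h v) else none
  | .double ht hb vt vb =>
      if t < vt then some (.double ht hb vt vb)
      else if t < vb then some (.single hb vb) else none

def Tab.trunc (t : ℕ) (T : Tab k) : Tab k := T.filterMap (Col.trunc t)

lemma Tab.trunc_append (t : ℕ) (A B : Tab k) : (A ++ B).trunc t = A.trunc t ++ B.trunc t := by
  simp [Tab.trunc]

lemma Tab.trunc_cons (t : ℕ) (c : Col k) (T : Tab k) :
    Tab.trunc t (c :: T) = (c.trunc t).toList ++ T.trunc t := by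
  cases h : c.trunc t <;> simp [Tab.trunc, h]

lemma Col.trunc_eq_some_self {t : ℕ} {c : Col k} (h : ∀ v ∈ c.entries, t < v) :
    c.trunc t = some c := by
  cases c <;> simp_all [Col.trunc, Col.entries]

lemma Col.trunc_eq_none {t : ℕ} {c : Col k} (hc : c.bottomVal ≤ t)
    (htop : ∀ ht hb vt vb, c = Col.double ht hb vt vb → vt < vb) : c.trunc t = none := by
  cases c with
  | single h v =>
    simp only [Col.bottomVal] at hc
    simp [Col.trunc, hc]
  | double ht hb vt vb =>
    have := htop ht hb vt vb rfl
    simp only [Col.bottomVal] at hc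
    simp only [Col.trunc]
    split_ifs <;> first | rfl | omega

lemma Col.trunc_succ_of_not_mem {t : ℕ} {c : Col k} (h : t + 1 ∉ c.entries) :
    c.trunc (t + 1) = c.trunc t := by
  cases c <;> simp only [Col.entries, List.mem_cons, List.not_mem_nil, or_false, not_or] at h <;>
    simp only [Col.trunc] <;> split_ifs <;> first | rfl | omega

lemma Tab.trunc_eq_self {t : ℕ} {T : Tab k} (h : ∀ v ∈ T.entries, t < v) : T.trunc t = T :=
  (List.filterMap_congr fun c hc => Col.trunc_eq_some_self fun v hv =>
    h v (Tab.mem_entries.mpr ⟨c, hc, hv⟩)).trans List.filterMap_some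

lemma Tab.trunc_eq_nil {t : ℕ} {T : Tab k} (hb : ∀ b ∈ T.bottoms, b ≤ t)
    (htop : ∀ c ∈ T, ∀ ht hb vt vb, c = Col.double ht hb vt vb → vt < vb) :
    T.trunc t = [] :=
  List.filterMap_eq_nil_iff.mpr fun c hc =>
    Col.trunc_eq_none (hb _ (List.mem_map_of_mem hc)) (htop c hc)

lemma Tab.trunc_succ_of_not_mem {t : ℕ} {T : Tab k} (h : t + 1 ∉ T.entries) :
    T.trunc (t + 1) = T.trunc t :=
  List.filterMap_congr fun c hc =>
    Col.trunc_succ_of_not_mem fun hv => h (Tab.mem_entries.mpr ⟨c, hc, hv⟩)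

inductive IsSStep (k v : ℕ) : Tab k → Tab k → Prop
  | append (T : Tab k) {j : ℕ} (hj1 : 1 ≤ j) (hj2 : j ≤ k) :
      IsSStep k v T (T ++ [Col.single j v])
  | stack (Tp Ts : Tab k) {j : ℕ} (vb : ℕ) (hj1 : 1 ≤ j) (hj2 : j ≤ k) :
      IsSStep k v (Tp ++ Col.single j vb :: Ts) (Tp ++ Col.double (k + 1 - j) j v vb :: Ts)

lemma updateTabS_append (v j : ℕ) (T : Tab k) :
    updateTabS k v T.shape (T.shape ++ [Letter.one j]) T = T ++ [Col.single j v] := by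
  induction T with
  | nil => rfl
  | cons c T ih =>
    simp only [Tab.shape, List.map_cons, List.cons_append] at ih ⊢
    simp [updateTabS, ih]

lemma updateTabS_stack (v j vb : ℕ) (Tp Ts : Tab k) (s s' : Word k) :
    updateTabS k v (Tp.shape ++ Letter.one j :: s) (Tp.shape ++ Letter.two :: s')
      (Tp ++ Col.single j vb :: Ts) = Tp ++ Col.double (k + 1 - j) j v vb :: Ts := by
  induction Tp with
  | nil => simp [Tab.shape, updateTabS]
  | cons c T ih =>
    simp only [Tab.shape, List.map_cons, List.cons_append] at ih ⊢
    simp [updateTabS, ih]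

lemma IsSStep.sCovers {v : ℕ} {A B : Tab k} (h : IsSStep k v A B) :
    SCovers k A.shape B.shape := by
  cases h with
  | append _ hj1 hj2 => exact .inl ⟨_, hj1, hj2, by simp [Tab.shape, Col.shape]⟩
  | stack Tp Ts vb hj1 hj2 =>
    exact .inr ⟨Tp.shape, Ts.shape, _, hj1, hj2, by simp [Tab.shape, Col.shape]⟩

lemma IsSStep.updateTabS_eq {v : ℕ} {A B : Tab k} (h : IsSStep k v A B) :
    updateTabS k v A.shape B.shape A = B := by
  cases h with
  | append _ => simpa [Tab.shape, Col.shape] using updateTabS_append v _ A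
  | stack Tp Ts vb =>
    simpa [Tab.shape_append, Tab.shape, Col.shape] using
      updateTabS_stack v _ vb Tp Ts Ts.shape Ts.shape

lemma SCovers.exists_isSStep (v : ℕ) {A : Tab k} {w : Word k} (h : SCovers k A.shape w) :
    ∃ B, IsSStep k v A B ∧ B.shape = w := by
  rcases h with ⟨j, hj1, hj2, rfl⟩ | ⟨p, s, j, hj1, hj2, hA, rfl⟩
  · exact ⟨_, .append A hj1 hj2, by simp [Tab.shape, Col.shape]⟩
  · obtain ⟨Tp, T', rfl, rfl, hT'⟩ := List.map_eq_append_iff.mp hA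
    obtain ⟨c, Ts, rfl, hc, rfl⟩ := List.map_eq_cons_iff.mp hT'
    cases c with
    | single h vb =>
      cases hc
      exact ⟨_, .stack Tp Ts vb hj1 hj2, by simp [Tab.shape, Col.shape]⟩
    | double => cases hc

lemma shape_updateTabS {v : ℕ} {A : Tab k} {w : Word k} (h : SCovers k A.shape w) :
    (updateTabS k v A.shape w A).shape = w := by
  obtain ⟨B, hB, rfl⟩ := h.exists_isSStep v
  rw [hB.updateTabS_eq]

lemma isSStep_updateTabS {v : ℕ} {A : Tab k} {w : Word k} (h : SCovers k A.shape w) :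
    IsSStep k v A (updateTabS k v A.shape w A) := by
  obtain ⟨B, hB, rfl⟩ := h.exists_isSStep v
  rwa [hB.updateTabS_eq]

lemma IsSStep.isStandardTabFrom {v m : ℕ} {A B : Tab k} (h : IsSStep k v A B)
    (hA : IsStandardTabFrom k (v + 1) m A) : IsStandardTabFrom k v (m + 1) B := by
  cases h with
  | append _ hj1 hj2 => exact hA.append_single hj1 hj2
  | stack Tp Ts vb hj1 hj2 => exact hA.stack hj1 hj2

lemma IsSStep.trunc_eq {v t : ℕ} {A B : Tab k} (h : IsSStep k v A B) (hvt : v ≤ t) :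
    B.trunc t = A.trunc t := by
  cases h with
  | append _ => simp [Tab.trunc, Col.trunc, show ¬ t < v by omega]
  | stack Tp Ts vb =>
    simp [Tab.trunc_append, Tab.trunc_cons, Col.trunc, show ¬ t < v by omega]

lemma isSStep_trunc_of_bottom {t h : ℕ} {P S : Tab k} {c : Col k} (hh1 : 1 ≤ h) (hh2 : h ≤ k)
    (hP : t + 1 ∉ P.entries) (hS : S.trunc t = []) (hS' : S.trunc (t + 1) = [])
    (hc : c.trunc t = some (.single h (t + 1))) (hc' : c.trunc (t + 1) = none) :
    IsSStep k (t + 1) ((P ++ c :: S).trunc (t + 1)) ((P ++ c :: S).trunc t) := by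
  simp only [Tab.trunc_append, Tab.trunc_cons, hc, hc', hS, hS', Tab.trunc_succ_of_not_mem hP,
    Option.toList_some, Option.toList_none, List.append_nil]
  exact .append _ hh1 hh2

lemma isSStep_trunc_of_top {t ht hb vb : ℕ} {P S : Tab k} (hb1 : 1 ≤ hb) (hb2 : hb ≤ k)
    (hht : ht = k + 1 - hb) (hvb : t + 1 < vb) (hP : t + 1 ∉ P.entries)
    (hS : t + 1 ∉ S.entries) :
    IsSStep k (t + 1) ((P ++ Col.double ht hb (t + 1) vb :: S).trunc (t + 1))
      ((P ++ Col.double ht hb (t + 1) vb :: S).trunc t) := by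
  simp only [Tab.trunc_append, Tab.trunc_cons, Col.trunc, Tab.trunc_succ_of_not_mem hP,
    Tab.trunc_succ_of_not_mem hS, lt_irrefl, hvb, Nat.lt_succ_self, if_true, if_false]
  subst hht
  exact .stack _ _ vb hb1 hb2

lemma IsStandardTabFrom.isSStep_trunc {a m t : ℕ} {T : Tab k}
    (hT : IsStandardTabFrom k a m T) (hmem : t + 1 ∈ T.entries) :
    IsSStep k (t + 1) (T.trunc (t + 1)) (T.trunc t) := by
  obtain ⟨hH, hperm, hchain, htop⟩ := hT
  obtain ⟨c, hcT, htc⟩ := Tab.mem_entries.mp hmem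
  obtain ⟨P, S, rfl⟩ : ∃ P S : Tab k, T = P ++ c :: S := List.append_of_mem hcT
  have hnd := hperm.nodup_iff.mpr List.nodup_range'
  rw [Tab.entries_append, Tab.entries_cons] at hnd
  have hP : t + 1 ∉ P.entries := fun h => List.disjoint_of_nodup_append hnd h
    (List.mem_append_left _ htc)
  have hS : t + 1 ∉ S.entries := fun h => List.disjoint_of_nodup_append
    (List.nodup_append.mp hnd).2.1 htc h
  have hSlt : ∀ b ∈ S.bottoms, b < c.bottomVal := by
    rw [Tab.bottoms_append, List.isChain_iff_pairwise] at hchain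
    exact fun b hb => List.rel_of_pairwise_cons (List.pairwise_append.mp hchain).2.1 hb
  have htopS : ∀ c ∈ S, ∀ ht hb vt vb, c = Col.double ht hb vt vb → vt < vb :=
    fun c hc => htop c (by simp [hc])
  have hSnil : ∀ t', c.bottomVal ≤ t' + 1 → S.trunc t' = [] := fun t' h =>
    Tab.trunc_eq_nil (fun b hb => by have := hSlt b hb; omega) htopS
  have hHc := hH c (by simp)
  cases c with
  | single h v =>
    obtain rfl : t + 1 = v := by simpa [Col.entries] using htc
    exact isSStep_trunc_of_bottom hHc.1 hHc.2 hP (hSnil t le_rfl)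
      (hSnil (t + 1) (by simp [Col.bottomVal]))
      (if_pos (by omega)) (if_neg (by omega))
  | double ht hb vt vb =>
    obtain ⟨hht1, hht2, rfl⟩ := hHc
    have hvt := htop _ hcT ht _ vt vb rfl
    simp only [Col.entries, List.mem_cons, List.not_mem_nil, or_false] at htc
    rcases htc with rfl | rfl
    · exact isSStep_trunc_of_top (by omega) (by omega) (by omega) hvt hP hS
    · exact isSStep_trunc_of_bottom (h := k + 1 - ht) (by omega) (by omega) hP (hSnil t le_rfl)
        (hSnil (t + 1) (by simp [Col.bottomVal])) ((if_neg (by omega)).trans (if_pos (by omega)))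
        ((if_neg (by omega)).trans (if_neg (by omega)))

def IsSChain (k n : ℕ) (c : ℕ → Word k) : Prop :=
  c 0 = [] ∧ ∀ i < n, SCovers k (c i) (c (i + 1))

section SChain

variable {n : ℕ} {c : ℕ → Word k}

lemma IsSChain.rank_eq (hc : IsSChain k n c) {m : ℕ} (hm : m ≤ n) : (c m).rank = m := by
  induction m with
  | zero => simp [hc.1, Word.rank]
  | succ m ih => rw [(hc.2 m hm).rank_eq, ih (by omega)]

lemma IsSChain.shape_sChainTab (hc : IsSChain k n c) {m : ℕ} (hm : m ≤ n) :
    (sChainTab k n c m).shape = c m := by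
  induction m with
  | zero => simp [sChainTab, Tab.shape, hc.1]
  | succ m ih =>
    have hcov := hc.2 m hm
    rw [← ih (by omega)] at hcov
    rw [sChainTab, ← ih (by omega), shape_updateTabS hcov]

lemma IsSChain.isSStep_sChainTab (hc : IsSChain k n c) {m : ℕ} (hm : m < n) :
    IsSStep k (n - m) (sChainTab k n c m) (sChainTab k n c (m + 1)) := by
  have hcov := hc.2 m hm
  rw [← hc.shape_sChainTab hm.le] at hcov
  have := isSStep_updateTabS (v := n - m) hcov
  rwa [hc.shape_sChainTab hm.le] at this

lemma IsSChain.isStandardTabFrom_sChainTab (hc : IsSChain k n c) {m : ℕ} (hm : m ≤ n) :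
    IsStandardTabFrom k (n - m + 1) m (sChainTab k n c m) := by
  induction m with
  | zero => simp [IsStandardTabFrom, sChainTab, Tab.entries, Tab.bottoms]
  | succ m ih =>
    have h := (hc.isSStep_sChainTab hm).isStandardTabFrom (ih (by omega))
    rwa [show n - m = n - (m + 1) + 1 by omega] at h

lemma IsSChain.trunc_sChainTab (hc : IsSChain k n c) {m m' : ℕ} (hm : m ≤ m') (hm' : m' ≤ n) :
    (sChainTab k n c m').trunc (n - m) = sChainTab k n c m := by
  induction m', hm using Nat.le_induction with
  | base =>
    refine Tab.trunc_eq_self fun v hv => ?_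
    have := (hc.isStandardTabFrom_sChainTab hm').lt_of_mem hv
    omega
  | succ m' hmm' ih =>
    rw [(hc.isSStep_sChainTab hm').trunc_eq (by omega), ih (by omega)]

end SChain

def natChain {n : ℕ} (c : Fin (n + 1) → Word k) (i : ℕ) : Word k :=
  c ⟨min i n, Nat.lt_succ_of_le (Nat.min_le_right i n)⟩

lemma natChain_of_le {n i : ℕ} (c : Fin (n + 1) → Word k) (h : i ≤ n) :
    natChain c i = c ⟨i, Nat.lt_succ_of_le h⟩ := by
  simp [natChain, Nat.min_eq_left h]

lemma sChainTabFin_eq {n : ℕ} (c : Fin (n + 1) → Word k) :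
    sChainTabFin k n c = sChainTab k n (natChain c) n := rfl

section SChainTo

variable {n : ℕ} {w : Word k} {c : Fin (n + 1) → Word k}

lemma IsSChainTo.isSChain (hc : IsSChainTo k n w c) : IsSChain k n (natChain c) := by
  refine ⟨(natChain_of_le c (Nat.zero_le n)).trans hc.1, fun i hi => ?_⟩
  rw [natChain_of_le c hi.le, natChain_of_le c hi]
  exact hc.2.1 ⟨i, hi⟩

lemma IsSChainTo.natChain_last (hc : IsSChainTo k n w c) : natChain c n = w :=
  (natChain_of_le c le_rfl).trans hc.2.2

lemma IsSChainTo.length_eq_rank (hc : IsSChainTo k n w c) : n = w.rank := by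
  rw [← hc.natChain_last, hc.isSChain.rank_eq le_rfl]

lemma IsSChainTo.isStandardTab_sChainTabFin (hc : IsSChainTo k n w c) :
    IsStandardTab k n (sChainTabFin k n c) := by
  have h := hc.isSChain.isStandardTabFrom_sChainTab le_rfl
  rwa [Nat.sub_self] at h

lemma IsSChainTo.shape_sChainTabFin (hc : IsSChainTo k n w c) : (sChainTabFin k n c).shape = w :=
  (hc.isSChain.shape_sChainTab le_rfl).trans hc.natChain_last

lemma IsSChainTo.eq_shape_trunc (hc : IsSChainTo k n w c) (i : Fin (n + 1)) :
    c i = ((sChainTabFin k n c).trunc (n - i)).shape := by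
  have hi := Nat.le_of_lt_succ i.2
  rw [sChainTabFin_eq, hc.isSChain.trunc_sChainTab hi le_rfl,
    hc.isSChain.shape_sChainTab hi, natChain_of_le c hi]

end SChainTo

def truncChain (n : ℕ) (T : Tab k) (i : Fin (n + 1)) : Word k := (T.trunc (n - i)).shape

section truncChain

variable {n : ℕ} {T : Tab k}

lemma IsStandardTab.trunc_zero (hT : IsStandardTab k n T) : T.trunc 0 = T :=
  Tab.trunc_eq_self fun _ hv => ((isStandardTab_iff.mp hT).lt_of_mem hv).1

lemma IsStandardTab.trunc_self (hT : IsStandardTab k n T) : T.trunc n = [] :=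
  Tab.trunc_eq_nil (fun _ hb => by
    have := (isStandardTab_iff.mp hT).lt_of_mem (Tab.mem_entries_of_mem_bottoms hb)
    omega) hT.2.2.2

lemma IsStandardTab.isSStep_trunc (hT : IsStandardTab k n T) {t : ℕ} (ht : t < n) :
    IsSStep k (t + 1) (T.trunc (t + 1)) (T.trunc t) :=
  (isStandardTab_iff.mp hT).isSStep_trunc
    (hT.2.1.mem_iff.mpr (List.mem_range'_1.mpr ⟨by omega, by omega⟩))

lemma natChain_truncChain {m : ℕ} (hm : m ≤ n) :
    natChain (truncChain n T) m = (T.trunc (n - m)).shape :=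
  natChain_of_le _ hm

lemma IsStandardTab.isSChainTo_truncChain (hT : IsStandardTab k n T) :
    IsSChainTo k n T.shape (truncChain n T) := by
  refine ⟨by simp [truncChain, hT.trunc_self, Tab.shape], fun i => ?_,
    by simp [truncChain, hT.trunc_zero]⟩
  have := (hT.isSStep_trunc (t := n - i - 1) (by omega)).sCovers
  simp only [truncChain, Fin.val_castSucc, Fin.val_succ]
  rwa [show n - i - 1 + 1 = n - i by omega, show n - i - 1 = n - (i + 1) by omega] at this

lemma IsStandardTab.sChainTab_truncChain (hT : IsStandardTab k n T) {m : ℕ} (hm : m ≤ n) :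
    sChainTab k n (natChain (truncChain n T)) m = T.trunc (n - m) := by
  induction m with
  | zero => simp [sChainTab, hT.trunc_self]
  | succ m ih =>
    have h := (hT.isSStep_trunc (t := n - m - 1) (by omega)).updateTabS_eq
    rw [show n - m - 1 + 1 = n - m by omega, show n - m - 1 = n - (m + 1) by omega] at h
    rw [sChainTab, ih (by omega), natChain_truncChain (by omega), natChain_truncChain hm]
    exact h

lemma IsStandardTab.sChainTabFin_truncChain (hT : IsStandardTab k n T) :
    sChainTabFin k n (truncChain n T) = T := by
  rw [sChainTabFin_eq, hT.sChainTab_truncChain le_rfl, Nat.sub_self, hT.trunc_zero]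

end truncChain

theorem standard_tableaux_biject_SChains_general (k : ℕ) (w : Word k) :
    (∀ (m : ℕ) (c : Fin (m + 1) → Word k), IsSChainTo k m w c → m = Word.rank w) ∧
    Set.BijOn (sChainTabFin k (Word.rank w))
      {c : Fin (Word.rank w + 1) → Word k | IsSChainTo k (Word.rank w) w c}
      {T : Tab k | IsStandardTab k (Word.rank w) T ∧ Tab.shape T = w} := by
  refine ⟨fun m c hc => hc.length_eq_rank, fun c hc => ?_, fun c hc c' hc' h => ?_,
    fun T ⟨hT, hTw⟩ => ?_⟩
  · exact ⟨hc.isStandardTab_sChainTabFin, hc.shape_sChainTabFin⟩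
  · funext i
    rw [IsSChainTo.eq_shape_trunc hc i, IsSChainTo.eq_shape_trunc hc' i, h]
  · exact ⟨truncChain _ T, hTw ▸ hT.isSChainTo_truncChain, hT.sChainTabFin_truncChain⟩

/-- For every word `w` over the alphabet `{1_1, …, 1_k, 2}`, the
standard `k`-ribbon Fibonacci tableaux of shape `w` with entries `1, …, n` are in
bijection with the maximal chains from the empty word `∅` to `w` in the poset `S(k)`
(such chains necessarily have length `n` equal to the rank of `w`), the tableau
corresponding to a chain having `j`'s placed in the `k`-ribbon created at the
`(n − j + 1)`-st step of the chain. -/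
theorem standard_tableaux_biject_SChains (k : ℕ) (hk : 1 ≤ k) (w : Word k)
    (hw : Word.Valid k w) :
    (∀ (m : ℕ) (c : Fin (m + 1) → Word k), IsSChainTo k m w c → m = Word.rank w) ∧
    Set.BijOn (sChainTabFin k (Word.rank w))
      {c : Fin (Word.rank w + 1) → Word k | IsSChainTo k (Word.rank w) w c}
      {T : Tab k | IsStandardTab k (Word.rank w) T ∧ Tab.shape T = w} :=
  standard_tableaux_biject_SChains_general k w

end KRF
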